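/- Let M be a nonempty finite set, A = (M → ℂ), and E ⊆ M × M an irreflexive relation, with graph calculus (Ω¹_E, d_E). Then the connectedness condition ker d_E = ℂ·1 holds (i.e. the only functions f ∈ A with d_E f = 0 are the constants) if and only if the undirected graph on M whose edge relation is the symmetrization E ∪ Eᵀ is connected. -/

import Mathlib

/-! A function with `d_E f = 0` takes equal values at the two ends of every edge, so it is
constant on the equivalence classes of the equivalence relation generated by `E`, i.e. on the
connected components of the undirected graph `E ∪ Eᵀ`. Conversely, the indicator function of a
component has zero differential, so it is constant only if that component is all of `M`. -/

noncomputable section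

namespace GraphCalculus

variable {M : Type} [Fintype M] [Nonempty M]

/-- The graph differential `(d_E f)(x,y) = f(y) - f(x)`. -/
def dE (E : Set (M × M)) (f : M → ℂ) : ↥E → ℂ :=
  fun e => f (e : M × M).2 - f (e : M × M).1

open Relation

theorem _root_.Relation.reflTransGen_symmGen_iff_forall_eq {α β : Type*} [Nontrivial β]
    {r : α → α → Prop} {a b : α} :
    ReflTransGen (SymmGen r) a b ↔ ∀ f : α → β, (∀ u v, r u v → f u = f v) → f a = f b := by
  classical
  constructor
  · intro hab f hf
    have hf' : ∀ u v, SymmGen r u v → f u = f v := by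
      rintro u v (huv | hvu)
      exacts [hf u v huv, (hf v u hvu).symm]
    simpa only [reflTransGen_eq_self] using hab.lift (p := Eq) f hf'
  · intro h
    obtain ⟨x, y, hxy⟩ := exists_pair_ne β
    have reach_iff : ∀ u v, r u v → (ReflTransGen (SymmGen r) a u ↔ ReflTransGen (SymmGen r) a v) :=
      fun u v huv => ⟨fun hu => hu.tail (.of_rel huv), fun hv => hv.tail (.of_rel_symm huv)⟩
    have key := h (fun z => if ReflTransGen (SymmGen r) a z then x else y) fun u v huv => by
      simp only [reach_iff u v huv]
    by_contra hb
    simp only [ReflTransGen.refl, if_true, hb, if_false] at key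
    exact hxy key

theorem dE_eq_zero_iff {V : Type} {E : Set (V × V)} {f : V → ℂ} :
    dE E f = 0 ↔ ∀ u v, (u, v) ∈ E → f u = f v := by
  simp only [funext_iff, dE, Pi.zero_apply, sub_eq_zero, Subtype.forall, Prod.forall]
  exact forall₂_congr fun u v => imp_congr_right fun _ => eq_comm

theorem graph_calculus_connected (E : Set (M × M)) :
    (∀ f : M → ℂ, dE E f = 0 → ∃ c : ℂ, f = fun _ => c) ↔
      (∀ x y : M,
        Relation.ReflTransGen (fun u v : M => (u, v) ∈ E ∨ (v, u) ∈ E) x y) := by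
  constructor
  · intro hker x y
    refine reflTransGen_symmGen_iff_forall_eq.2 fun (f : M → ℂ) hf => ?_
    obtain ⟨c, rfl⟩ := hker f (dE_eq_zero_iff.2 hf)
    rfl
  · intro hconn f hf
    obtain ⟨x₀⟩ := ‹Nonempty M›
    exact ⟨f x₀, funext fun y =>
      reflTransGen_symmGen_iff_forall_eq.1 (hconn y x₀) f (dE_eq_zero_iff.1 hf)⟩

end GraphCalculus
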